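/- arXiv:0706.1788 — 5 statements merged into one kernel-verified Lean document; each statement's English description precedes it below -/
import Mathlib

section
/- Let ε, η > 0, let k ≥ 1 be an integer, let I ⊆ ℝ be an interval (not necessarily compact), and let f : I → ℝ be a C^k function satisfying |f^{(k)}(x)| ≥ η for all x ∈ I. Then the Lebesgue measure of the set {x ∈ I : |f(x)| ≤ ε} is at most 2^{k+1} (ε/η)^{1/k}. -/
/-!
If `E = {x ∈ I | |f x| ≤ ε}` had measure larger than `k d`, then averaging over the cosets
`r + dℤ`, `r ∈ (0, d]`, yields `k + 1` points of `E` at mutual distances at least `d`. By the mean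
value theorem for divided differences (Rolle's theorem applied `k` times to `f` minus its Lagrange
interpolant) there is `ξ ∈ I` with `f⁽ᵏ⁾(ξ) = k! f[x₀, …, x_k]`, while
`|f[x₀, …, x_k]| ≤ (k + 1) ε / d ^ k`. Hence `η d ^ k ≤ (k + 1)! ε`, and
`k ^ k (k + 1)! ≤ 2 ^ (k (k + 1))` turns this into `k d ≤ 2 ^ (k + 1) (ε / η) ^ (1 / k)`.
-/

open MeasureTheory Set Finset Nat

theorem ContinuousOn.measurableSet_sep_of_isClosed {α β : Type*} [TopologicalSpace α]
    [MeasurableSpace α] [OpensMeasurableSpace α] [TopologicalSpace β] {f : α → β} {s : Set α}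
    {t : Set β} (hf : ContinuousOn f s) (hs : MeasurableSet s) (ht : IsClosed t) :
    MeasurableSet {x ∈ s | f x ∈ t} := by
  obtain ⟨u, hu, heq⟩ := continuousOn_iff_isClosed.1 hf t ht
  have : {x ∈ s | f x ∈ t} = u ∩ s := by rw [← heq, inter_comm]; rfl
  exact this ▸ hu.measurableSet.inter hs

open scoped ENNReal in
theorem exists_separated_points_of_lt_volume {E : Set ℝ} (hE : MeasurableSet E) {n : ℕ} {d : ℝ}
    (hd : 0 < d) (h : n * ENNReal.ofReal d < volume E) :
    ∃ x : Fin (n + 1) → ℝ, (∀ i, x i ∈ E) ∧ ∀ i j, i < j → x i + d ≤ x j := by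
  classical
  set G := AddSubgroup.zmultiples d
  have hgap (g g' : G) (hg : g < g') : (g : ℝ) + d ≤ g' := by
    obtain ⟨_, a, rfl⟩ := g
    obtain ⟨_, b, rfl⟩ := g'
    have hab : a < b := (zsmul_left_strictMono hd).lt_iff_lt.1 hg
    have : (a : ℝ) + 1 ≤ b := by exact_mod_cast hab
    simp only [zsmul_eq_mul]
    nlinarith
  obtain ⟨r, T, hT⟩ : ∃ r : ℝ, ∃ T : Finset G, n < #(T.filter fun g : G => (g : ℝ) + r ∈ E) := by
    by_contra! hle
    refine h.not_ge ?_
    have hcount (r : ℝ) : ∑' g : G, E.indicator 1 (g +ᵥ r) ≤ (n : ℝ≥0∞) := by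
      rw [ENNReal.tsum_eq_iSup_sum]
      refine iSup_le fun T => ?_
      simp only [indicator_apply, Pi.one_apply, Finset.sum_boole, AddSubgroup.vadd_def, vadd_eq_add]
      exact Nat.cast_le.2 (hle r T)
    calc volume E = ∫⁻ x, E.indicator 1 x := (lintegral_indicator_one hE).symm
      _ = ∑' g : G, ∫⁻ x in Ioc 0 (0 + d), E.indicator 1 (g +ᵥ x) :=
        (isAddFundamentalDomain_Ioc hd 0).lintegral_eq_tsum'' _
      _ = ∫⁻ x in Ioc 0 (0 + d), ∑' g : G, E.indicator 1 (g +ᵥ x) :=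
        (lintegral_tsum fun g => ((measurable_const.indicator hE).comp
          (measurable_const_vadd g)).aemeasurable).symm
      _ ≤ ∫⁻ _ in Ioc 0 (0 + d), (n : ℝ≥0∞) := lintegral_mono hcount
      _ = n * ENNReal.ofReal d := by simp
  obtain ⟨t, htT, ht⟩ := exists_subset_card_eq hT
  set e := t.orderEmbOfFin ht
  have he (i) : (e i : ℝ) + r ∈ E := (mem_filter.1 (htT (t.orderEmbOfFin_mem ht i))).2
  exact ⟨fun i => e i + r, he, fun i j hij => by linarith [hgap (e i) (e j) (e.strictMono hij)]⟩

theorem exists_iteratedDeriv_eq_zero {n : ℕ} {f : ℝ → ℝ} {x : Fin (n + 2) → ℝ}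
    (hx : StrictMono x) (hfc : ContinuousOn f (Icc (x 0) (x (Fin.last _))))
    (hfd : ∀ y ∈ Ioo (x 0) (x (Fin.last _)), ContDiffAt ℝ (n + 1) f y)
    (hzero : ∀ i, f (x i) = 0) :
    ∃ ξ ∈ Ioo (x 0) (x (Fin.last _)), iteratedDeriv (n + 1) f ξ = 0 := by
  induction n generalizing f with
  | zero =>
    obtain ⟨ξ, hξ, h⟩ := exists_deriv_eq_zero (hx Fin.last_pos) hfc (by rw [hzero, hzero])
    exact ⟨ξ, hξ, by rwa [iteratedDeriv_one]⟩
  | succ n ih =>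
    have hrolle (i : Fin (n + 2)) : ∃ y ∈ Ioo (x i.castSucc) (x i.succ), deriv f y = 0 :=
      exists_deriv_eq_zero (hx i.castSucc_lt_succ)
        (hfc.mono (Icc_subset_Icc (hx.monotone (Fin.zero_le _)) (hx.monotone (Fin.le_last _))))
        (by rw [hzero, hzero])
    choose y hy hy0 using hrolle
    have hy_mono : StrictMono y := Fin.strictMono_iff_lt_succ.2 fun i =>
      (hy _).2.trans_le ((hx.monotone (by simp)).trans (hy _).1.le)
    have hy_sub : Icc (y 0) (y (Fin.last _)) ⊆ Ioo (x 0) (x (Fin.last _)) :=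
      Icc_subset_Ioo (hy 0).1 (hy _).2
    have hdf (z) (hz : z ∈ Icc (y 0) (y (Fin.last _))) : ContDiffAt ℝ (n + 1) (deriv f) z :=
      (hfd z (hy_sub hz)).derivWithin le_rfl
    obtain ⟨ξ, hξ, h⟩ := ih hy_mono (fun z hz => (hdf z hz).continuousAt.continuousWithinAt)
      (fun z hz => hdf z (Ioo_subset_Icc_self hz)) hy0
    exact ⟨ξ, hy_sub (Ioo_subset_Icc_self hξ), by rwa [iteratedDeriv_succ']⟩

theorem Polynomial.iteratedDeriv_eval (p : Polynomial ℝ) (n : ℕ) :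
    iteratedDeriv n (fun t => p.eval t) = fun t => (derivative^[n] p).eval t := by
  induction n generalizing p with
  | zero => simp
  | succ n ih =>
    have hderiv : deriv (fun t => p.eval t) = fun t => (derivative p).eval t := by
      ext t; exact p.deriv
    rw [iteratedDeriv_succ', hderiv, ih, Function.iterate_succ_apply]

noncomputable def dividedDifference {n : ℕ} (f : ℝ → ℝ) (x : Fin (n + 1) → ℝ) : ℝ :=
  ∑ i, f (x i) / ∏ j ∈ univ.erase i, (x i - x j)

theorem Lagrange.iteratedDeriv_eval_interpolate {n : ℕ} {x : Fin (n + 1) → ℝ}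
    (hx : Function.Injective x) (f : ℝ → ℝ) (t : ℝ) :
    iteratedDeriv n (fun t => (Lagrange.interpolate univ x (fun i => f (x i))).eval t) t =
      n ! * dividedDifference f x := by
  set P := Lagrange.interpolate univ x (fun i => f (x i))
  have hdeg : P.degree < #(univ : Finset (Fin (n + 1))) := degree_interpolate_lt _ hx.injOn
  have hnode (i) : P.eval (x i) = f (x i) := eval_interpolate_at_node _ hx.injOn (mem_univ i)
  rw [P.iteratedDeriv_eval]
  dsimp only
  rw [eval_iterate_derivative_eq_sum hx.injOn hdeg (by simp)]
  simp only [hnode]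
  simp [dividedDifference]

theorem exists_iteratedDeriv_eq_factorial_mul_dividedDifference {n : ℕ} {f : ℝ → ℝ}
    {x : Fin (n + 2) → ℝ} (hx : StrictMono x)
    (hfc : ContinuousOn f (Icc (x 0) (x (Fin.last _))))
    (hfd : ∀ y ∈ Ioo (x 0) (x (Fin.last _)), ContDiffAt ℝ (n + 1) f y) :
    ∃ ξ ∈ Ioo (x 0) (x (Fin.last _)),
      iteratedDeriv (n + 1) f ξ = (n + 1)! * dividedDifference f x := by
  set P := Lagrange.interpolate univ x (fun i => f (x i))
  have hP : ContDiff ℝ (n + 1) fun t => P.eval t := by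
    simpa using P.contDiff_aeval (𝕜 := ℝ) (n + 1)
  obtain ⟨ξ, hξ, h⟩ := exists_iteratedDeriv_eq_zero (f := fun t => f t - P.eval t) hx
    (hfc.sub hP.continuous.continuousOn) (fun y hy => (hfd y hy).sub hP.contDiffAt)
    fun i => sub_eq_zero.2
      (Lagrange.eval_interpolate_at_node (fun i => f (x i)) hx.injective.injOn (mem_univ i)).symm
  refine ⟨ξ, hξ, ?_⟩
  rw [iteratedDeriv_fun_sub (hfd ξ hξ) hP.contDiffAt, sub_eq_zero] at h
  rw [h, Lagrange.iteratedDeriv_eval_interpolate hx.injective]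

theorem abs_dividedDifference_le {n : ℕ} {f : ℝ → ℝ} {x : Fin (n + 1) → ℝ} {ε d : ℝ}
    (hd : 0 < d) (hf : ∀ i, |f (x i)| ≤ ε) (hx : ∀ i j, i ≠ j → d ≤ |x i - x j|) :
    |dividedDifference f x| ≤ (n + 1) * ε / d ^ n := by
  have hprod (i) : d ^ n ≤ ∏ j ∈ univ.erase i, |x i - x j| := by
    calc d ^ n = ∏ _j ∈ univ.erase i, d := by simp [card_erase_of_mem]
      _ ≤ _ := prod_le_prod (fun _ _ => hd.le) fun j hj => hx i j (ne_of_mem_erase hj).symm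
  calc |dividedDifference f x| ≤ ∑ i, |f (x i) / ∏ j ∈ univ.erase i, (x i - x j)| :=
        abs_sum_le_sum_abs _ _
    _ ≤ ∑ _i : Fin (n + 1), ε / d ^ n := sum_le_sum fun i _ => by
        rw [abs_div, abs_prod]
        exact div_le_div₀ ((abs_nonneg _).trans (hf i)) (hf i) (by positivity) (hprod i)
    _ = (n + 1) * ε / d ^ n := by simp; ring

theorem mul_pow_le_factorial_mul_of_sublevel {ε η d : ℝ} (hd : 0 < d) {k : ℕ} (hk : 1 ≤ k)
    {I : Set ℝ} (hI : I.OrdConnected) {f : ℝ → ℝ} (hf : ContDiffOn ℝ k f I)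
    (hder : ∀ x ∈ I, η ≤ |iteratedDerivWithin k f I x|) {x : Fin (k + 1) → ℝ}
    (hxI : ∀ i, x i ∈ I) (hfx : ∀ i, |f (x i)| ≤ ε) (hsep : ∀ i j, i < j → x i + d ≤ x j) :
    η * d ^ k ≤ (k + 1)! * ε := by
  obtain ⟨n, rfl⟩ : ∃ n, k = n + 1 := ⟨k - 1, by omega⟩
  have hx : StrictMono x := fun i j hij => by linarith [hsep i j hij]
  have hIcc : Icc (x 0) (x (Fin.last _)) ⊆ I := hI.out (hxI 0) (hxI _)
  have hIoo : Ioo (x 0) (x (Fin.last _)) ⊆ interior I :=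
    interior_maximal (Ioo_subset_Icc_self.trans hIcc) isOpen_Ioo
  have hfd (y) (hy : y ∈ Ioo (x 0) (x (Fin.last _))) : ContDiffAt ℝ (n + 1) f y :=
    hf.contDiffAt (mem_interior_iff_mem_nhds.1 (hIoo hy))
  obtain ⟨ξ, hξ, hξeq⟩ :=
    exists_iteratedDeriv_eq_factorial_mul_dividedDifference hx (hf.continuousOn.mono hIcc) hfd
  have hwithin : iteratedDerivWithin (n + 1) f I ξ = iteratedDeriv (n + 1) f ξ :=
    iteratedDerivWithin_eq_iteratedDeriv (uniqueDiffOn_convex hI.convex ⟨ξ, hIoo hξ⟩)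
      (hfd ξ hξ) (interior_subset (hIoo hξ))
  have hsep' (i j) (hij : i ≠ j) : d ≤ |x i - x j| := by
    rcases hij.lt_or_gt with h | h
    · rw [abs_sub_comm, abs_of_pos (by linarith [hsep i j h])]; linarith [hsep i j h]
    · rw [abs_of_pos (by linarith [hsep j i h])]; linarith [hsep j i h]
  have hbound := abs_dividedDifference_le hd hfx hsep'
  have := hder ξ (interior_subset (hIoo hξ))
  rw [hwithin, hξeq, abs_mul, abs_of_pos (by positivity)] at this
  have hη : η ≤ (n + 1)! * ((n + 1 + 1) * ε / d ^ (n + 1)) :=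
    this.trans (by gcongr; exact_mod_cast hbound)
  calc η * d ^ (n + 1) ≤ (n + 1)! * ((n + 1 + 1) * ε / d ^ (n + 1)) * d ^ (n + 1) := by gcongr
    _ = (n + 1 + 1)! * ε := by
      rw [factorial_succ (n + 1)]; push_cast; field_simp

theorem pow_mul_factorial_le (k : ℕ) : k ^ k * (k + 1)! ≤ (2 ^ (k + 1)) ^ k := by
  have hsq : k * (k + 1) ≤ 2 ^ (k + 1) := by
    induction k with
    | zero => simp
    | succ k ih => rw [pow_succ 2 (k + 1)]; nlinarith [k.lt_two_pow_self, pow_succ 2 k]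
  have hfact : (k + 1)! ≤ (k + 1) ^ k := by
    simpa [← (k + 1).factorial_mul_descFactorial k.le_succ] using (k + 1).descFactorial_le_pow k
  calc k ^ k * (k + 1)! ≤ k ^ k * (k + 1) ^ k := Nat.mul_le_mul_left _ hfact
    _ = (k * (k + 1)) ^ k := (mul_pow _ _ _).symm
    _ ≤ (2 ^ (k + 1)) ^ k := Nat.pow_le_pow_left hsq k

theorem natCast_mul_le_of_mul_pow_le {ε η d : ℝ} (hη : 0 < η) (hd : 0 ≤ d) {k : ℕ} (hk : 1 ≤ k)
    (h : η * d ^ k ≤ (k + 1)! * ε) : k * d ≤ 2 ^ (k + 1) * (ε / η) ^ ((1 : ℝ) / k) := by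
  have hk0 : k ≠ 0 := by omega
  have hε : 0 ≤ ε / η := div_nonneg (nonneg_of_mul_nonneg_right
    ((by positivity : 0 ≤ η * d ^ k).trans h) (by positivity)) hη.le
  have hcomb : ((k ^ k * (k + 1)! : ℕ) : ℝ) ≤ ((2 ^ (k + 1)) ^ k : ℕ) :=
    Nat.cast_le.2 (pow_mul_factorial_le k)
  push_cast at hcomb
  rw [← pow_le_pow_iff_left₀ (by positivity) (by positivity) hk0, mul_pow, mul_pow,
    one_div, Real.rpow_inv_natCast_pow hε hk0]
  calc (k : ℝ) ^ k * d ^ k ≤ k ^ k * ((k + 1)! * (ε / η)) := by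
        gcongr
        rwa [← mul_div_assoc, le_div_iff₀ hη, mul_comm]
    _ = (k ^ k * (k + 1)!) * (ε / η) := by ring
    _ ≤ (2 ^ (k + 1)) ^ k * (ε / η) := by gcongr

/-- **Interval Lemma.** If `f` is `C^k` on an interval `I ⊆ ℝ` and its `k`-th derivative
is bounded below in absolute value by `η > 0` on `I`, then the Lebesgue measure of
`{x ∈ I : |f x| ≤ ε}` is at most `2^(k+1) (ε/η)^(1/k)`. -/
theorem stmt_0 (ε η : ℝ) (hε : 0 < ε) (hη : 0 < η) (k : ℕ) (hk : 1 ≤ k)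
    (I : Set ℝ) (hI : I.OrdConnected) (f : ℝ → ℝ)
    (hf : ContDiffOn ℝ k f I)
    (hder : ∀ x ∈ I, η ≤ |iteratedDerivWithin k f I x|) :
    volume {x ∈ I | |f x| ≤ ε} ≤
      ENNReal.ofReal (2 ^ (k + 1) * (ε / η) ^ ((1 : ℝ) / k)) := by
  by_contra! hlt
  obtain ⟨c, -, hBc, hcE⟩ := ENNReal.lt_iff_exists_real_btwn.1 hlt
  have hB : 0 ≤ 2 ^ (k + 1) * (ε / η) ^ ((1 : ℝ) / k) := by positivity
  have hc : 2 ^ (k + 1) * (ε / η) ^ ((1 : ℝ) / k) < c :=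
    (ENNReal.ofReal_lt_ofReal_iff_of_nonneg hB).1 hBc
  have hk0 : (0 : ℝ) < k := by exact_mod_cast hk
  set d := c / k
  have hd : 0 < d := div_pos (hB.trans_lt hc) hk0
  have hkd : (k : ℝ) * d = c := mul_div_cancel₀ c hk0.ne'
  obtain ⟨x, hxE, hsep⟩ := exists_separated_points_of_lt_volume
    (hf.continuousOn.measurableSet_sep_of_isClosed hI.measurableSet
      (isClosed_le continuous_abs continuous_const)) hd
    (by rwa [← ENNReal.ofReal_natCast, ← ENNReal.ofReal_mul (by positivity), hkd])
  have := natCast_mul_le_of_mul_pow_le hη hd.le hk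
    (mul_pow_le_factorial_mul_of_sublevel hd hk hI hf hder (fun i => (hxE i).1)
      (fun i => (hxE i).2) hsep)
  linarith
end

section
/- Let G be a finite connected graph (multiple edges allowed) with two distinguished distinct vertices u and v such that u and v have odd degree and every other vertex has even degree. Assume G is one-particle irreducible: deleting any single edge of G leaves a connected graph. Let T be a spanning tree of G and let ℓ₃ be an edge of T lying on the unique path in T joining u to v. Then there exist two distinct edges ℓ₁ and ℓ₂ of G not belonging to T such that each of ℓ₁ and ℓ₂ has its two endpoints in different connected components of T ∖ {ℓ₃}; equivalently, ℓ₃ lies on the fundamental cycle Λ_{ℓ₁} and on the fundamental cycle Λ_{ℓ₂}. -/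
/-- Reachability in a multigraph given by an endpoint map `ends : E → V × V`, using only
edges in the set `S`. -/
def Reach {V E : Type*} (ends : E → V × V) (S : Set E) (a b : V) : Prop :=
  Relation.ReflTransGen (fun x y => ∃ e ∈ S, ends e = (x, y) ∨ ends e = (y, x)) a b

/-- The degree of a vertex `w` in the multigraph `ends : E → V × V` (loops count twice). -/
def mdeg {V E : Type*} [Fintype E] [DecidableEq V] (ends : E → V × V) (w : V) : ℕ :=
  (Finset.univ.filter fun e : E => (ends e).1 = w).card +
    (Finset.univ.filter fun e : E => (ends e).2 = w).card

/-!
Let `A` be the component of `u` in `T \ {ℓ₃}`; it contains `u` but not `v`. Summing degrees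
over `A` counts each edge inside `A` twice and each edge leaving `A` once, so the number of
edges leaving `A` is odd, because `u` is the only odd vertex in `A`. Every path from `u`
to `v` leaves `A`, so by one-particle irreducibility no single edge is the only one leaving
`A`; being odd, their number is at least three.
All but possibly `ℓ₃` are outside `T`, and their endpoints are separated in `T \ {ℓ₃}`
because `A` is a component.
-/

open Finset

namespace Finset

theorem card_filter_add_card_filter_eq_two_mul_add {α : Type*} (s : Finset α) (p q : α → Prop)
    [DecidablePred p] [DecidablePred q] :
    #{x ∈ s | p x} + #{x ∈ s | q x} = 2 * #{x ∈ s | p x ∧ q x} + #{x ∈ s | ¬(p x ↔ q x)} := by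
  simp only [card_filter, mul_sum, ← sum_add_distrib]
  refine sum_congr rfl fun x _ => ?_
  by_cases p x <;> by_cases q x <;> simp [*]

theorem two_lt_card_of_odd_of_forall_exists_ne {α : Type*} {s : Finset α} (hs : Odd #s)
    (h : ∀ x, ∃ y ∈ s, y ≠ x) : 2 < #s := by
  have hs₁ : #s ≠ 1 := fun h₁ => by
    obtain ⟨x, rfl⟩ := card_eq_one.1 h₁
    obtain ⟨y, hy, hyx⟩ := h x
    exact hyx (mem_singleton.1 hy)
  obtain ⟨k, hk⟩ := hs
  omega

end Finset

section

variable {V E : Type*}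

def crossingEdges [Fintype E] [DecidableEq V] (ends : E → V × V) (A : Finset V) : Finset E :=
  {e | ¬((ends e).1 ∈ A ↔ (ends e).2 ∈ A)}

variable {ends : E → V × V} {S : Set E}

theorem Reach.single {e : E} (he : e ∈ S) : Reach ends S (ends e).1 (ends e).2 :=
  Relation.ReflTransGen.single ⟨e, he, Or.inl rfl⟩

theorem Reach.trans {a b c : V} (hab : Reach ends S a b) (hbc : Reach ends S b c) :
    Reach ends S a c :=
  Relation.ReflTransGen.trans hab hbc

theorem Reach.symm {a b : V} (h : Reach ends S a b) : Reach ends S b a :=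
  Relation.ReflTransGen.rec (motive := fun c _ => Reach ends S c a) .refl
    (fun _ ⟨e, he, hend⟩ ih => .head ⟨e, he, hend.symm⟩ ih) h

theorem Reach.iff_of_forall_mem {P : V → Prop} (hP : ∀ e ∈ S, (P (ends e).1 ↔ P (ends e).2))
    {a b : V} (h : Reach ends S a b) : P a ↔ P b := by
  induction h with
  | refl => rfl
  | tail _ hstep ih =>
    obtain ⟨e, he, hend | hend⟩ := hstep
    · have := hP e he; rw [hend] at this; exact ih.trans this
    · have := hP e he; rw [hend] at this; exact ih.trans this.symm

variable [DecidableEq V] [Fintype E]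

theorem Reach.exists_mem_crossingEdges {A : Finset V} {a b : V} (h : Reach ends S a b)
    (ha : a ∈ A) (hb : b ∉ A) : ∃ f ∈ crossingEdges ends A, f ∈ S := by
  by_contra! hS
  refine hb ((h.iff_of_forall_mem fun e he => ?_).1 ha)
  by_contra hcross
  exact hS e (by simpa [crossingEdges] using hcross) he

theorem not_reach_of_mem_crossingEdges {A : Finset V} {a : V}
    (hA : ∀ w, w ∈ A ↔ Reach ends S a w) {f : E} (hf : f ∈ crossingEdges ends A) :
    ¬Reach ends S (ends f).1 (ends f).2 := fun h => by
  simp only [crossingEdges, mem_filter, mem_univ, true_and, hA] at hf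
  exact hf ⟨fun h₁ => h₁.trans h, fun h₂ => h₂.trans h.symm⟩

theorem sum_card_filter_eq_eq_card_filter_mem (f : E → V) (A : Finset V) :
    ∑ w ∈ A, #{e | f e = w} = #{e | f e ∈ A} := by
  rw [card_eq_sum_card_fiberwise (f := f) (t := A) fun e he => by simpa using he]
  refine sum_congr rfl fun w hw => congrArg card ?_
  ext e
  simp only [mem_filter, mem_univ, true_and]
  exact ⟨fun he => ⟨he ▸ hw, he⟩, And.right⟩

theorem sum_mdeg_eq_two_mul_add_card_crossingEdges (A : Finset V) :
    ∑ w ∈ A, mdeg ends w =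
      2 * #{e | (ends e).1 ∈ A ∧ (ends e).2 ∈ A} + #(crossingEdges ends A) := by
  simp only [mdeg, sum_add_distrib, sum_card_filter_eq_eq_card_filter_mem]
  exact card_filter_add_card_filter_eq_two_mul_add _ _ _

theorem odd_card_crossingEdges {A : Finset V} {u v : V} (hu : u ∈ A) (hv : v ∉ A)
    (hu_odd : Odd (mdeg ends u)) (heven : ∀ w, w ≠ u → w ≠ v → Even (mdeg ends w)) :
    Odd #(crossingEdges ends A) := by
  have hsum : Odd (∑ w ∈ A, mdeg ends w) := by
    rw [← add_sum_erase A _ hu]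
    refine hu_odd.add_even (even_sum _ fun w hw => heven w (ne_of_mem_erase hw) ?_)
    rintro rfl; exact hv (mem_of_mem_erase hw)
  rw [sum_mdeg_eq_two_mul_add_card_crossingEdges] at hsum
  exact (Nat.odd_add'.1 hsum).2 (even_two_mul _)

end

theorem stmt_6_general {V E : Type*} [Fintype V] [Fintype E] [DecidableEq V]
    (ends : E → V × V)
    (u v : V)
    (hu : Odd (mdeg ends u))
    (heven : ∀ w : V, w ≠ u → w ≠ v → Even (mdeg ends w))
    (h1PI : ∀ e₀ : E, ∀ a b : V, Reach ends {e : E | e ≠ e₀} a b)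
    (T : Finset E)
    (ℓ₃ : E)
    (hpath : ¬ Reach ends (↑T \ {ℓ₃}) u v) :
    ∃ ℓ₁ ℓ₂ : E, ℓ₁ ≠ ℓ₂ ∧ ℓ₁ ∉ T ∧ ℓ₂ ∉ T ∧
      ¬ Reach ends (↑T \ {ℓ₃}) (ends ℓ₁).1 (ends ℓ₁).2 ∧
      ¬ Reach ends (↑T \ {ℓ₃}) (ends ℓ₂).1 (ends ℓ₂).2 := by
  classical
  set S : Set E := ↑T \ {ℓ₃}
  set A : Finset V := {w | Reach ends S u w}
  have hA : ∀ w, w ∈ A ↔ Reach ends S u w := by simp [A]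
  have huA : u ∈ A := (hA u).2 .refl
  have hvA : v ∉ A := fun h => hpath ((hA v).1 h)
  set C := crossingEdges ends A
  have hC : 2 < #C := two_lt_card_of_odd_of_forall_exists_ne
    (odd_card_crossingEdges huA hvA hu heven)
    fun e₀ => (h1PI e₀ u v).exists_mem_crossingEdges huA hvA
  have hsep : ∀ f ∈ C.erase ℓ₃, f ∉ T ∧ ¬Reach ends S (ends f).1 (ends f).2 := fun f hf => by
    have hfS := not_reach_of_mem_crossingEdges hA (mem_of_mem_erase hf)
    exact ⟨fun hfT => hfS (Reach.single ⟨hfT, ne_of_mem_erase hf⟩), hfS⟩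
  obtain ⟨ℓ₁, h₁, ℓ₂, h₂, hne⟩ :=
    one_lt_card.1 ((by omega : 1 < #C - 1).trans_le pred_card_le_card_erase)
  exact ⟨ℓ₁, ℓ₂, hne, (hsep ℓ₁ h₁).1, (hsep ℓ₂ h₂).1, (hsep ℓ₁ h₁).2, (hsep ℓ₂ h₂).2⟩

/-- **Overlapping loops.** Let `G` be a finite connected multigraph with two distinguished
distinct vertices `u`, `v` of odd degree, all other vertices having even degree, and assume
`G` is one-particle irreducible (removing any single edge leaves it connected). Let `T` be a
spanning tree (a connected spanning edge set with `#V - 1` edges) and let `ℓ₃ ∈ T` lie on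
the path in `T` joining `u` to `v` (equivalently, `u` and `v` lie in different components
of `T \ {ℓ₃}`). Then there are two distinct edges `ℓ₁, ℓ₂ ∉ T` each of whose endpoints lie
in different components of `T \ {ℓ₃}`; equivalently, `ℓ₃` lies on both fundamental cycles
`Λ_{ℓ₁}` and `Λ_{ℓ₂}`. -/
theorem stmt_6 {V E : Type*} [Fintype V] [Fintype E] [DecidableEq V] [DecidableEq E]
    (ends : E → V × V)
    (hconn : ∀ a b : V, Reach ends Set.univ a b)
    (u v : V) (huv : u ≠ v)
    (hu : Odd (mdeg ends u)) (hv : Odd (mdeg ends v))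
    (heven : ∀ w : V, w ≠ u → w ≠ v → Even (mdeg ends w))
    (h1PI : ∀ e₀ : E, ∀ a b : V, Reach ends {e : E | e ≠ e₀} a b)
    (T : Finset E)
    (hTconn : ∀ a b : V, Reach ends ↑T a b)
    (hTcard : T.card = Fintype.card V - 1)
    (ℓ₃ : E) (hℓ₃ : ℓ₃ ∈ T)
    (hpath : ¬ Reach ends (↑T \ {ℓ₃}) u v) :
    ∃ ℓ₁ ℓ₂ : E, ℓ₁ ≠ ℓ₂ ∧ ℓ₁ ∉ T ∧ ℓ₂ ∉ T ∧
      ¬ Reach ends (↑T \ {ℓ₃}) (ends ℓ₁).1 (ends ℓ₁).2 ∧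
      ¬ Reach ends (↑T \ {ℓ₃}) (ends ℓ₂).1 (ends ℓ₂).2 :=
  stmt_6_general ends u v hu heven h1PI T ℓ₃ hpath
end

section
/- Let G be a finite connected graph with spanning tree T, and let j : E(G) → ℤ be an assignment of scales to the edges of G with the following property: for every m ∈ ℤ, any two vertices lying in the same connected component of the subgraph G_{≥m} formed by the edges of scale at least m are joined by a path in T all of whose edges have scale at least m (i.e. T intersects each connected component of G_{≥m} in a spanning tree of that component). Let ℓ₃ be an edge of T and let ℓ be an edge of G not in T whose two endpoints lie in different connected components of T ∖ {ℓ₃}. Then j(ℓ) ≤ j(ℓ₃). -/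
namespace Reach

variable {V E : Type*} {ends : E → V × V} {S S' : Set E} {a b : V}

theorem mono (hSS' : S ⊆ S') (h : Reach ends S a b) : Reach ends S' a b :=
  Relation.ReflTransGen.mono (fun _ _ ⟨e, he, hends⟩ => ⟨e, hSS' he, hends⟩) _ _ h

theorem ends_of_mem {e : E} (he : e ∈ S) : Reach ends S (ends e).1 (ends e).2 :=
  Relation.ReflTransGen.single ⟨e, he, Or.inl rfl⟩

end Reach

theorem stmt_7_general {V E : Type*}
    (ends : E → V × V)
    (T : Finset E)
    (j : E → ℤ)
    (hscales : ∀ m : ℤ, ∀ a b : V, Reach ends {e : E | m ≤ j e} a b →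
      Reach ends (↑T ∩ {e : E | m ≤ j e}) a b)
    (ℓ₃ : E)
    (ℓ : E)
    (hsep : ¬ Reach ends (↑T \ {ℓ₃}) (ends ℓ).1 (ends ℓ).2) :
    j ℓ ≤ j ℓ₃ := by
  by_contra! hlt
  have hℓ_reach : Reach ends {e | j ℓ ≤ j e} (ends ℓ).1 (ends ℓ).2 :=
    Reach.ends_of_mem (le_refl (j ℓ))
  -- Tree edges of scale at least `j ℓ > j ℓ₃` cannot include `ℓ₃`.
  refine hsep ((hscales _ _ _ hℓ_reach).mono ?_)
  rintro e ⟨heT, hle⟩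
  exact ⟨heT, by rintro rfl; exact (not_le.mpr hlt) hle⟩

/-- **Scales on fundamental cycles.** Let `G` be a finite connected multigraph with a
spanning tree `T` (a connected spanning edge set with `#V - 1` edges), and let
`j : E → ℤ` be a scale assignment such that for every `m`, any two vertices joined by a
path of edges of scale `≥ m` are joined by a path in `T` all of whose edges have scale
`≥ m`. If `ℓ₃ ∈ T` and `ℓ ∉ T` has its two endpoints in different connected components of
`T \ {ℓ₃}`, then `j ℓ ≤ j ℓ₃`. -/
theorem stmt_7 {V E : Type*} [Fintype V] [Fintype E]
    (ends : E → V × V)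
    (hconn : ∀ a b : V, Reach ends Set.univ a b)
    (T : Finset E)
    (hTconn : ∀ a b : V, Reach ends ↑T a b)
    (hTcard : T.card = Fintype.card V - 1)
    (j : E → ℤ)
    (hscales : ∀ m : ℤ, ∀ a b : V, Reach ends {e : E | m ≤ j e} a b →
      Reach ends (↑T ∩ {e : E | m ≤ j e}) a b)
    (ℓ₃ : E) (hℓ₃ : ℓ₃ ∈ T)
    (ℓ : E) (hℓ : ℓ ∉ T)
    (hsep : ¬ Reach ends (↑T \ {ℓ₃}) (ends ℓ).1 (ends ℓ).2) :
    j ℓ ≤ j ℓ₃ :=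
  stmt_7_general ends T j hscales ℓ₃ ℓ hsep
end

section
/- There exists a constant A > 0 such that for all q₀ ∈ (0, 1/2), |I(q₀) − 2 log 2 · (log q₀)² − C₁ · |log q₀|| ≤ A, where C₁ = 2 (log 2)² − 4 ∫₀¹ (1/x) log((1 + 2x)/(1 + x)) dx. -/
/-!
Since `Φ = -∂_ε (ε / (ε² + q²))`, the `x`- and `x'`-integrations are explicit and give
`I(q) = 2 ∫₀¹ dy ∫₀¹ dv (g(y + v) - g(y + 2v)) / v` with `g(u) = log (1 + u²/q²) / u`.
As `g(u) = 2 ∫₀¹ k(xu) dx` with `k(ε) = ε / (ε² + q²)` and `|k'| = |Φ| ≤ 1/q²`, `g` is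
`1/q²`-Lipschitz, so the order of integration may be swapped; integrating in `y` first
leaves `I(q) = 2 ∫₀¹ dv ∫₁² ds (g(vs) - g(1 + vs))`.
The first half is `∫₁² s⁻¹ ∫₀ˢ g`, where `∫₀¹ g = (log q)² + O(1)` (split at `u = q`) carries
the leading term and `∫₁ˢ g = -2 log q · log s + O(1)`. In the second half `1 ≤ 1 + vs ≤ 3`,
where `g(u) = -2 log q / u + O(1)`, and `∫₁² ds / (1 + vs) = v⁻¹ log ((1 + 2v)/(1 + v))`.
-/

/-- `Φ_{q₀}(ε) = (ε² - q₀²)/(ε² + q₀²)² = Re (1/(i q₀ + ε)²)`. -/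
noncomputable def Phi (q₀ ε : ℝ) : ℝ := (ε ^ 2 - q₀ ^ 2) / (ε ^ 2 + q₀ ^ 2) ^ 2

/-- `I(q₀) = 4 ∫₀¹ dy ∫₀¹ dy' ∫₀¹ dx' ∫₀^{x'} dx Φ_{q₀}((2x' - x) y' + y x')`. -/
noncomputable def Ifun (q₀ : ℝ) : ℝ :=
  4 * ∫ y in (0 : ℝ)..1, ∫ y' in (0 : ℝ)..1, ∫ x' in (0 : ℝ)..1, ∫ x in (0 : ℝ)..x',
    Phi q₀ ((2 * x' - x) * y' + y * x')

open MeasureTheory intervalIntegral Set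

lemma abs_integral_sub_integral_le {f φ ψ : ℝ → ℝ} {a b : ℝ} (hab : a ≤ b)
    (hf : IntervalIntegrable f volume a b) (hφ : IntervalIntegrable φ volume a b)
    (hψ : IntervalIntegrable ψ volume a b) (h : ∀ x ∈ Ioc a b, |f x - φ x| ≤ ψ x) :
    |(∫ x in a..b, f x) - ∫ x in a..b, φ x| ≤ ∫ x in a..b, ψ x := by
  rw [← integral_sub hf hφ]
  exact intervalIntegral.norm_integral_le_of_norm_le hab
    (ae_of_all _ fun x hx => (Real.norm_eq_abs _).trans_le (h x hx)) hψ

lemma IntervalIntegrable.of_continuousOn_Ioi {f : ℝ → ℝ} (hf : ContinuousOn f (Ioi 0)) {a b : ℝ}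
    (ha : 0 < a) (hb : 0 < b) : IntervalIntegrable f volume a b :=
  (hf.mono fun _ hx => lt_of_lt_of_le (lt_min ha hb) hx.1).intervalIntegrable

variable {q : ℝ}

lemma hasDerivAt_div_sq_add_sq (hq : q ≠ 0) (ε : ℝ) :
    HasDerivAt (fun t => t / (t ^ 2 + q ^ 2)) (-Phi q ε) ε := by
  have hpos : ε ^ 2 + q ^ 2 ≠ 0 := by positivity
  refine ((hasDerivAt_id' ε).div (((hasDerivAt_id' ε).pow 2).add_const (q ^ 2)) hpos).congr_deriv ?_
  simp only [Phi, Pi.pow_apply]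
  field_simp
  ring

lemma continuous_Phi (hq : q ≠ 0) : Continuous (Phi q) :=
  Continuous.div (by fun_prop) (by fun_prop) fun ε => by positivity

lemma abs_Phi_le (hq : q ≠ 0) (ε : ℝ) : |Phi q ε| ≤ 1 / q ^ 2 := by
  have hq2 : 0 < q ^ 2 := by positivity
  have hnum : |ε ^ 2 - q ^ 2| ≤ ε ^ 2 + q ^ 2 := abs_le.mpr ⟨by nlinarith, by nlinarith⟩
  rw [Phi, abs_div, abs_of_pos (by positivity : 0 < (ε ^ 2 + q ^ 2) ^ 2)]
  calc _ ≤ (ε ^ 2 + q ^ 2) / (ε ^ 2 + q ^ 2) ^ 2 := by gcongr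
    _ = 1 / (ε ^ 2 + q ^ 2) := by field_simp
    _ ≤ 1 / q ^ 2 := by gcongr; nlinarith

lemma integral_Phi (hq : q ≠ 0) (a b : ℝ) :
    ∫ ε in a..b, Phi q ε = a / (a ^ 2 + q ^ 2) - b / (b ^ 2 + q ^ 2) := by
  have := integral_eq_sub_of_hasDerivAt (fun ε _ => hasDerivAt_div_sq_add_sq hq ε)
    ((continuous_Phi hq).neg.intervalIntegrable a b)
  rw [intervalIntegral.integral_neg] at this
  linarith

lemma abs_div_sq_add_sq_sub_le (hq : q ≠ 0) (a b : ℝ) :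
    |a / (a ^ 2 + q ^ 2) - b / (b ^ 2 + q ^ 2)| ≤ 1 / q ^ 2 * |a - b| :=
  Convex.norm_image_sub_le_of_norm_hasDerivWithin_le
    (fun ε _ => (hasDerivAt_div_sq_add_sq hq ε).hasDerivWithinAt)
    (fun ε _ => by simpa using abs_Phi_le hq ε) convex_univ (mem_univ b) (mem_univ a)

/-- At `u = 0` the junk value `0` of the division is also the limit, so `logKernel q` is
continuous. -/
noncomputable def logKernel (q u : ℝ) : ℝ := Real.log (1 + u ^ 2 / q ^ 2) / u

lemma integral_mul_div_sq_add_sq (hq : q ≠ 0) (c : ℝ) :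
    ∫ x in (0 : ℝ)..1, x * c / ((x * c) ^ 2 + q ^ 2) = logKernel q c / 2 := by
  rcases eq_or_ne c 0 with rfl | hc
  · simp [logKernel]
  have hderiv : ∀ x ∈ uIcc (0 : ℝ) 1, HasDerivAt (fun x => Real.log ((x * c) ^ 2 + q ^ 2) / (2 * c))
      (x * c / ((x * c) ^ 2 + q ^ 2)) x := fun x _ => by
    have hpos : (x * c) ^ 2 + q ^ 2 ≠ 0 := by positivity
    refine ((((hasDerivAt_mul_const c).pow 2).add_const (q ^ 2)).log hpos).div_const (2 * c)
      |>.congr_deriv ?_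
    simp only [Pi.pow_apply]
    field_simp
    ring
  rw [integral_eq_sub_of_hasDerivAt hderiv
    (Continuous.intervalIntegrable (Continuous.div (by fun_prop) (by fun_prop)
      fun x => by positivity) 0 1)]
  have hq2 : q ^ 2 ≠ 0 := by positivity
  rw [logKernel, one_add_div hq2, Real.log_div (by positivity) hq2]
  field_simp
  ring_nf

lemma logKernel_zero_right (q : ℝ) : logKernel q 0 = 0 := by simp [logKernel]

lemma abs_logKernel_sub_le (hq : q ≠ 0) (a b : ℝ) :
    |logKernel q a - logKernel q b| ≤ 1 / q ^ 2 * |a - b| := by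
  have hcont : ∀ c, Continuous fun x : ℝ => x * c / ((x * c) ^ 2 + q ^ 2) := fun c =>
    Continuous.div (by fun_prop) (by fun_prop) fun x => by positivity
  have hrepr : logKernel q a - logKernel q b = 2 * ∫ x in (0 : ℝ)..1,
      (x * a / ((x * a) ^ 2 + q ^ 2) - x * b / ((x * b) ^ 2 + q ^ 2)) := by
    rw [integral_sub ((hcont a).intervalIntegrable 0 1) ((hcont b).intervalIntegrable 0 1),
      integral_mul_div_sq_add_sq hq, integral_mul_div_sq_add_sq hq]
    ring
  have hbound : ‖∫ x in (0 : ℝ)..1,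
      (x * a / ((x * a) ^ 2 + q ^ 2) - x * b / ((x * b) ^ 2 + q ^ 2))‖
      ≤ ∫ x in (0 : ℝ)..1, x * (1 / q ^ 2 * |a - b|) := by
    refine intervalIntegral.norm_integral_le_of_norm_le zero_le_one (ae_of_all _ fun x hx => ?_)
      ((by fun_prop : Continuous fun x : ℝ => x * (1 / q ^ 2 * |a - b|)).intervalIntegrable 0 1)
    calc _ ≤ 1 / q ^ 2 * |x * a - x * b| := abs_div_sq_add_sq_sub_le hq _ _
      _ = x * (1 / q ^ 2 * |a - b|) := by
        rw [← mul_sub, abs_mul, abs_of_pos hx.1]; ring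
  rw [intervalIntegral.integral_mul_const, integral_id] at hbound
  rw [hrepr, abs_mul, abs_two]
  simp only [Real.norm_eq_abs] at hbound
  linarith

lemma continuous_logKernel (hq : q ≠ 0) : Continuous (logKernel q) :=
  (LipschitzWith.of_dist_le_mul (K := ⟨1 / q ^ 2, by positivity⟩) fun a b =>
    abs_logKernel_sub_le hq a b).continuous

lemma intervalIntegrable_logKernel_comp (hq : q ≠ 0) {f : ℝ → ℝ} (hf : Continuous f) (a b : ℝ) :
    IntervalIntegrable (fun x => logKernel q (f x)) volume a b :=
  ((continuous_logKernel hq).comp hf).intervalIntegrable a b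

lemma logKernel_eq (hq : q ≠ 0) (u : ℝ) :
    logKernel q u = Real.log (q ^ 2 + u ^ 2) / u - 2 * Real.log q / u := by
  have hq2 : q ^ 2 ≠ 0 := by positivity
  rw [logKernel, one_add_div hq2, Real.log_div (by positivity) hq2, Real.log_pow, sub_div]
  push_cast; ring_nf

lemma integral_Phi_affine (hq : q ≠ 0) {v : ℝ} (hv : v ≠ 0) (y x' : ℝ) :
    ∫ x in (0 : ℝ)..x', Phi q ((2 * x' - x) * v + y * x') =
      (x' * (y + v) / ((x' * (y + v)) ^ 2 + q ^ 2)
        - x' * (y + 2 * v) / ((x' * (y + 2 * v)) ^ 2 + q ^ 2)) / v := by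
  simp only [show ∀ x, (2 * x' - x) * v + y * x' = -v * x + x' * (y + 2 * v) by intro x; ring]
  rw [integral_comp_mul_add (fun ε => Phi q ε) (neg_ne_zero.mpr hv), integral_Phi hq,
    show -v * 0 + x' * (y + 2 * v) = x' * (y + 2 * v) by ring,
    show -v * x' + x' * (y + 2 * v) = x' * (y + v) by ring, smul_eq_mul, inv_neg]
  ring

lemma integral_integral_Phi_affine (hq : q ≠ 0) {v : ℝ} (hv : v ≠ 0) (y : ℝ) :
    ∫ x' in (0 : ℝ)..1, ∫ x in (0 : ℝ)..x', Phi q ((2 * x' - x) * v + y * x') =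
      (logKernel q (y + v) - logKernel q (y + 2 * v)) / (2 * v) := by
  have hcont : ∀ c, Continuous fun x : ℝ => x * c / ((x * c) ^ 2 + q ^ 2) := fun c =>
    Continuous.div (by fun_prop) (by fun_prop) fun x => by positivity
  simp only [integral_Phi_affine hq hv]
  rw [intervalIntegral.integral_div, integral_sub ((hcont _).intervalIntegrable 0 1)
    ((hcont _).intervalIntegrable 0 1), integral_mul_div_sq_add_sq hq,
    integral_mul_div_sq_add_sq hq]
  field_simp

lemma Ifun_eq_integral_integral_logKernel (hq : q ≠ 0) :
    Ifun q = 2 * ∫ y in (0 : ℝ)..1, ∫ v in (0 : ℝ)..1,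
      (logKernel q (y + v) - logKernel q (y + 2 * v)) / v := by
  have hinner : ∀ y : ℝ, ∫ v in (0 : ℝ)..1, ∫ x' in (0 : ℝ)..1, ∫ x in (0 : ℝ)..x',
      Phi q ((2 * x' - x) * v + y * x') = (1 / 2) * ∫ v in (0 : ℝ)..1,
        (logKernel q (y + v) - logKernel q (y + 2 * v)) / v := fun y => by
    rw [← intervalIntegral.integral_const_mul]
    refine integral_congr_ae (ae_of_all _ fun v hv => ?_)
    rw [uIoc_of_le zero_le_one] at hv
    rw [integral_integral_Phi_affine hq hv.1.ne']
    field_simp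
  simp only [Ifun, hinner, intervalIntegral.integral_const_mul]
  ring

lemma abs_logKernel_sub_div_le (hq : q ≠ 0) (y v : ℝ) :
    |(logKernel q (y + v) - logKernel q (y + 2 * v)) / v| ≤ 1 / q ^ 2 := by
  rcases eq_or_ne v 0 with rfl | hv
  · simp only [div_zero, abs_zero]; positivity
  rw [abs_div, div_le_iff₀ (abs_pos.mpr hv)]
  calc _ ≤ 1 / q ^ 2 * |y + v - (y + 2 * v)| := abs_logKernel_sub_le hq _ _
    _ = 1 / q ^ 2 * |v| := by rw [show y + v - (y + 2 * v) = -v by ring, abs_neg]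

lemma integral_integral_logKernel_sub_div_swap (hq : q ≠ 0) :
    ∫ y in (0 : ℝ)..1, ∫ v in (0 : ℝ)..1, (logKernel q (y + v) - logKernel q (y + 2 * v)) / v =
      ∫ v in (0 : ℝ)..1, ∫ y in (0 : ℝ)..1,
        (logKernel q (y + v) - logKernel q (y + 2 * v)) / v := by
  have hg := (continuous_logKernel hq).measurable
  refine intervalIntegral_intervalIntegral_swap <|
    Measure.integrableOn_of_bounded (M := 1 / q ^ 2) ?_ ?_
      (ae_of_all _ fun p => abs_logKernel_sub_div_le hq p.1 p.2)
  · simp [Measure.volume_eq_prod, Measure.prod_prod]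
  · exact (by fun_prop : Measurable fun p : ℝ × ℝ =>
      (logKernel q (p.1 + p.2) - logKernel q (p.1 + 2 * p.2)) / p.2).aestronglyMeasurable

lemma integral_logKernel_sub_div (hq : q ≠ 0) {v : ℝ} (hv : v ≠ 0) :
    ∫ y in (0 : ℝ)..1, (logKernel q (y + v) - logKernel q (y + 2 * v)) / v =
      ∫ s in (1 : ℝ)..2, (logKernel q (v * s) - logKernel q (1 + v * s)) := by
  have hg := continuous_logKernel hq
  rw [intervalIntegral.integral_div,
    integral_sub (intervalIntegrable_logKernel_comp hq (by fun_prop) 0 1)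
      (intervalIntegrable_logKernel_comp hq (by fun_prop) 0 1),
    integral_sub (intervalIntegrable_logKernel_comp hq (by fun_prop) 1 2)
      (intervalIntegrable_logKernel_comp hq (by fun_prop) 1 2),
    integral_comp_add_right, integral_comp_add_right,
    integral_interval_sub_interval_comm (hg.intervalIntegrable _ _) (hg.intervalIntegrable _ _)
      (hg.intervalIntegrable _ _),
    integral_comp_mul_left _ hv, integral_comp_add_mul _ hv]
  simp only [zero_add, mul_one, smul_eq_mul, mul_comm v 2]
  field_simp

lemma Ifun_eq_two_mul_sub (hq : q ≠ 0) :
    Ifun q = 2 * ((∫ v in (0 : ℝ)..1, ∫ s in (1 : ℝ)..2, logKernel q (v * s)) -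
      ∫ v in (0 : ℝ)..1, ∫ s in (1 : ℝ)..2, logKernel q (1 + v * s)) := by
  have hg := continuous_logKernel hq
  have hinner : ∫ v in (0 : ℝ)..1, ∫ y in (0 : ℝ)..1,
      (logKernel q (y + v) - logKernel q (y + 2 * v)) / v =
      ∫ v in (0 : ℝ)..1, ((∫ s in (1 : ℝ)..2, logKernel q (v * s)) -
        ∫ s in (1 : ℝ)..2, logKernel q (1 + v * s)) := by
    refine intervalIntegral.integral_congr_ae (ae_of_all _ fun v hv => ?_)
    rw [uIoc_of_le zero_le_one] at hv
    rw [integral_logKernel_sub_div hq hv.1.ne', integral_sub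
      (intervalIntegrable_logKernel_comp hq (by fun_prop) 1 2)
      (intervalIntegrable_logKernel_comp hq (by fun_prop) 1 2)]
  rw [Ifun_eq_integral_integral_logKernel hq, integral_integral_logKernel_sub_div_swap hq, hinner,
    integral_sub (Continuous.intervalIntegrable (by fun_prop) 0 1)
      (Continuous.intervalIntegrable (by fun_prop) 0 1)]

lemma integral_integral_logKernel_mul (hq : q ≠ 0) :
    ∫ v in (0 : ℝ)..1, ∫ s in (1 : ℝ)..2, logKernel q (v * s) =
      ∫ s in (1 : ℝ)..2, s⁻¹ * ∫ u in (0 : ℝ)..s, logKernel q u := by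
  have hg := continuous_logKernel hq
  rw [intervalIntegral_intervalIntegral_swap ((ContinuousOn.integrableOn_compact
      (isCompact_uIcc.prod isCompact_uIcc) (Continuous.continuousOn (by fun_prop))).mono_set
      (prod_mono uIoc_subset_uIcc uIoc_subset_uIcc))]
  refine integral_congr fun s hs => ?_
  rw [uIcc_of_le one_le_two] at hs
  rw [integral_comp_mul_right _ (by linarith [hs.1] : s ≠ 0), zero_mul, one_mul, smul_eq_mul]

lemma abs_logKernel_add_log_div_le (hq : 0 < q) (hq1 : q ≤ 1) {u : ℝ} (hu1 : 1 ≤ u)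
    (hu3 : u ≤ 3) : |logKernel q u + 2 * Real.log q / u| ≤ Real.log 10 := by
  have hlog : 0 ≤ Real.log (q ^ 2 + u ^ 2) := Real.log_nonneg (by nlinarith)
  rw [logKernel_eq hq.ne', sub_add_cancel, abs_of_nonneg (by positivity)]
  calc _ ≤ Real.log (q ^ 2 + u ^ 2) := div_le_self hlog hu1
    _ ≤ Real.log 10 := Real.log_le_log (by positivity) (by nlinarith)

lemma abs_integral_logKernel_add_le (hq : 0 < q) (hq1 : q ≤ 1) {s : ℝ} (hs1 : 1 ≤ s)
    (hs3 : s ≤ 3) :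
    |(∫ u in (1 : ℝ)..s, logKernel q u) + 2 * Real.log q * Real.log s| ≤
      Real.log 10 * (s - 1) := by
  have hφ : ∫ u in (1 : ℝ)..s, -(2 * Real.log q) * u⁻¹ = -(2 * Real.log q * Real.log s) := by
    rw [intervalIntegral.integral_const_mul, integral_inv_of_pos one_pos (by linarith), div_one]
    ring
  have h := abs_integral_sub_integral_le (φ := fun u => -(2 * Real.log q) * u⁻¹)
    (ψ := fun _ => Real.log 10) hs1 ((continuous_logKernel hq.ne').intervalIntegrable 1 s)
    (IntervalIntegrable.of_continuousOn_Ioi (by fun_prop (disch := exact fun _ hx => ne_of_gt hx))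
      one_pos (by linarith))
    intervalIntegrable_const fun u hu => ?_
  · rw [hφ, sub_neg_eq_add, intervalIntegral.integral_const, smul_eq_mul] at h
    linarith
  · simpa [neg_mul, sub_neg_eq_add, div_eq_mul_inv] using
      abs_logKernel_add_log_div_le hq hq1 hu.1.le (hu.2.trans hs3)

lemma abs_integral_inv_mul_integral_logKernel_sub_le (hq : 0 < q) (hq1 : q ≤ 1) :
    |(∫ s in (1 : ℝ)..2, s⁻¹ * ∫ u in (0 : ℝ)..s, logKernel q u) -
      ((∫ u in (0 : ℝ)..1, logKernel q u) * Real.log 2 - Real.log q * Real.log 2 ^ 2)| ≤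
      Real.log 10 := by
  set G₁ := ∫ u in (0 : ℝ)..1, logKernel q u
  have hg := continuous_logKernel hq.ne'
  have hderiv : ∀ s ∈ uIcc (1 : ℝ) 2,
      HasDerivAt (fun s => G₁ * Real.log s - Real.log q * Real.log s ^ 2)
        (s⁻¹ * (G₁ - 2 * Real.log q * Real.log s)) s := fun s hs => by
    rw [uIcc_of_le one_le_two] at hs
    have hs0 : s ≠ 0 := (by linarith [hs.1] : (0 : ℝ) < s).ne'
    refine (((Real.hasDerivAt_log hs0).const_mul G₁).sub
      (((Real.hasDerivAt_log hs0).pow 2).const_mul (Real.log q))).congr_deriv ?_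
    push_cast
    ring
  have hφ : IntervalIntegrable (fun s => s⁻¹ * (G₁ - 2 * Real.log q * Real.log s)) volume 1 2 :=
    IntervalIntegrable.of_continuousOn_Ioi (by fun_prop (disch := exact fun _ hx => ne_of_gt hx))
      one_pos two_pos
  have hf : IntervalIntegrable (fun s => s⁻¹ * ∫ u in (0 : ℝ)..s, logKernel q u) volume 1 2 :=
    IntervalIntegrable.of_continuousOn_Ioi (by fun_prop (disch := exact fun _ hx => ne_of_gt hx))
      one_pos two_pos
  have h := abs_integral_sub_integral_le (ψ := fun _ => Real.log 10) one_le_two hf hφ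
    intervalIntegrable_const fun s hs => ?_
  · rw [integral_eq_sub_of_hasDerivAt hderiv hφ, intervalIntegral.integral_const, smul_eq_mul,
      Real.log_one, show (2 : ℝ) - 1 = 1 by norm_num, one_mul] at h
    simpa using h
  have hs0 : 0 < s := one_pos.trans hs.1
  have hsplit : (∫ u in (0 : ℝ)..s, logKernel q u) - G₁ = ∫ u in (1 : ℝ)..s, logKernel q u :=
    integral_interval_sub_left (hg.intervalIntegrable _ _) (hg.intervalIntegrable _ _)
  calc |s⁻¹ * (∫ u in (0 : ℝ)..s, logKernel q u) - s⁻¹ * (G₁ - 2 * Real.log q * Real.log s)|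
      = s⁻¹ * |(∫ u in (1 : ℝ)..s, logKernel q u) + 2 * Real.log q * Real.log s| := by
        rw [← hsplit, ← mul_sub, abs_mul, abs_of_pos (inv_pos.mpr hs0)]
        ring_nf
    _ ≤ s⁻¹ * (Real.log 10 * (s - 1)) := by
        gcongr
        exact abs_integral_logKernel_add_le hq hq1 hs.1.le (by linarith [hs.2])
    _ ≤ Real.log 10 := by
        rw [mul_left_comm, mul_sub, inv_mul_cancel₀ hs0.ne', mul_one]
        nlinarith [Real.log_nonneg (by norm_num : (1 : ℝ) ≤ 10), inv_pos.mpr hs0]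

lemma abs_logKernel_sub_log_le (hq : q ≠ 0) {u : ℝ} (hu : 0 < u) :
    |logKernel q u - 2 * (Real.log u - Real.log q) / u| ≤ q ^ 2 / u ^ 3 := by
  have hrem : logKernel q u - 2 * (Real.log u - Real.log q) / u =
      Real.log (1 + q ^ 2 / u ^ 2) / u := by
    rw [logKernel_eq hq, one_add_div (by positivity), Real.log_div (by positivity) (by positivity),
      Real.log_pow, add_comm (u ^ 2)]
    push_cast
    ring
  have hlog : Real.log (1 + q ^ 2 / u ^ 2) ≤ q ^ 2 / u ^ 2 := by
    linarith [Real.log_le_sub_one_of_pos (by positivity : 0 < 1 + q ^ 2 / u ^ 2)]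
  rw [hrem, abs_of_nonneg (div_nonneg (Real.log_nonneg (by simp; positivity)) hu.le)]
  calc _ ≤ q ^ 2 / u ^ 2 / u := by gcongr
    _ = q ^ 2 / u ^ 3 := by ring

lemma integral_two_mul_log_sub_log_div (hq : 0 < q) (hq1 : q ≤ 1) :
    ∫ u in q..1, 2 * (Real.log u - Real.log q) / u = Real.log q ^ 2 := by
  have hderiv : ∀ u ∈ uIcc q 1, HasDerivAt (fun u => (Real.log u - Real.log q) ^ 2)
      (2 * (Real.log u - Real.log q) / u) u := fun u hu => by
    rw [uIcc_of_le hq1] at hu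
    refine (((Real.hasDerivAt_log (by linarith [hu.1] : (0 : ℝ) < u).ne').sub_const
      (Real.log q)).pow 2).congr_deriv ?_
    push_cast
    ring
  rw [integral_eq_sub_of_hasDerivAt hderiv (IntervalIntegrable.of_continuousOn_Ioi
    (by fun_prop (disch := exact fun _ hx => ne_of_gt hx)) hq one_pos)]
  simp

lemma integral_sq_div_cube (hq : 0 < q) (hq1 : q ≤ 1) :
    ∫ u in q..1, q ^ 2 / u ^ 3 = (1 - q ^ 2) / 2 := by
  have hderiv : ∀ u ∈ uIcc q 1, HasDerivAt (fun u => -(q ^ 2 / 2) * (u ^ 2)⁻¹)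
      (q ^ 2 / u ^ 3) u := fun u hu => by
    rw [uIcc_of_le hq1] at hu
    have hu0 : u ≠ 0 := (by linarith [hu.1] : (0 : ℝ) < u).ne'
    refine (((hasDerivAt_pow 2 u).inv (pow_ne_zero 2 hu0)).const_mul _).congr_deriv ?_
    field_simp
    ring
  rw [integral_eq_sub_of_hasDerivAt hderiv (IntervalIntegrable.of_continuousOn_Ioi
    (by fun_prop (disch := exact fun _ hx => pow_ne_zero 3 (ne_of_gt hx))) hq one_pos)]
  field_simp
  ring

lemma abs_integral_logKernel_sub_log_sq_le (hq : 0 < q) (hq1 : q ≤ 1) :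
    |(∫ u in (0 : ℝ)..1, logKernel q u) - Real.log q ^ 2| ≤ 1 := by
  have hg := continuous_logKernel hq.ne'
  have hnear : |∫ u in (0 : ℝ)..q, logKernel q u| ≤ 1 / 2 := by
    have h := intervalIntegral.norm_integral_le_of_norm_le (μ := volume) (f := logKernel q)
      (g := fun u => u / q ^ 2) hq.le
      (ae_of_all _ fun u hu => ?_) (Continuous.intervalIntegrable (by fun_prop) 0 q)
    · rw [intervalIntegral.integral_div, integral_id] at h
      calc _ = ‖∫ u in (0 : ℝ)..q, logKernel q u‖ := (Real.norm_eq_abs _).symm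
        _ ≤ (q ^ 2 - 0 ^ 2) / 2 / q ^ 2 := h
        _ = 1 / 2 := by field_simp; ring
    · simpa [logKernel_zero_right, abs_of_pos hu.1, div_eq_inv_mul] using
        abs_logKernel_sub_le hq.ne' u 0
  have hfar := abs_integral_sub_integral_le hq1 (hg.intervalIntegrable q 1)
    (IntervalIntegrable.of_continuousOn_Ioi (by fun_prop (disch := exact fun _ hx => ne_of_gt hx))
      hq one_pos)
    (IntervalIntegrable.of_continuousOn_Ioi (f := fun u => q ^ 2 / u ^ 3)
      (by fun_prop (disch := exact fun _ hx => pow_ne_zero 3 (ne_of_gt hx))) hq one_pos)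
    fun u hu => abs_logKernel_sub_log_le hq.ne' (hq.trans hu.1)
  rw [integral_two_mul_log_sub_log_div hq hq1, integral_sq_div_cube hq hq1] at hfar
  rw [← integral_add_adjacent_intervals (hg.intervalIntegrable 0 q) (hg.intervalIntegrable q 1),
    add_sub_assoc]
  calc _ ≤ |∫ u in (0 : ℝ)..q, logKernel q u| +
        |(∫ u in q..1, logKernel q u) - Real.log q ^ 2| := abs_add_le _ _
    _ ≤ 1 / 2 + (1 - q ^ 2) / 2 := add_le_add hnear hfar
    _ ≤ 1 := by nlinarith

lemma integral_inv_one_add_mul {v : ℝ} (hv : 0 < v) :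
    ∫ s in (1 : ℝ)..2, (1 + v * s)⁻¹ = 1 / v * Real.log ((1 + 2 * v) / (1 + v)) := by
  rw [integral_comp_add_mul (fun u => u⁻¹) hv.ne',
    integral_inv_of_pos (by positivity) (by positivity), smul_eq_mul, mul_one, mul_comm v 2,
    one_div]

lemma intervalIntegrable_one_div_mul_log :
    IntervalIntegrable (fun x : ℝ => 1 / x * Real.log ((1 + 2 * x) / (1 + x))) volume 0 1 := by
  rw [intervalIntegrable_iff_integrableOn_Ioc_of_le zero_le_one]
  have hmeas : Measurable fun x : ℝ => 1 / x * Real.log ((1 + 2 * x) / (1 + x)) := by fun_prop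
  refine Measure.integrableOn_of_bounded (M := 1) (by simp) hmeas.aestronglyMeasurable
    ((ae_restrict_iff' measurableSet_Ioc).mpr (ae_of_all _ fun x hx => ?_))
  rw [← integral_inv_one_add_mul hx.1]
  calc _ ≤ 1 * |(2 : ℝ) - 1| := intervalIntegral.norm_integral_le_of_norm_le_const fun s hs => ?_
    _ = 1 := by norm_num
  rw [uIoc_of_le one_le_two] at hs
  rw [norm_inv, Real.norm_eq_abs, abs_of_pos (by nlinarith [hx.1, hs.1])]
  exact inv_le_one_of_one_le₀ (by nlinarith [hx.1, hs.1])

lemma abs_integral_integral_logKernel_one_add_mul_add_le (hq : 0 < q) (hq1 : q ≤ 1) :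
    |(∫ v in (0 : ℝ)..1, ∫ s in (1 : ℝ)..2, logKernel q (1 + v * s)) +
      2 * Real.log q * ∫ x in (0 : ℝ)..1, 1 / x * Real.log ((1 + 2 * x) / (1 + x))| ≤
      Real.log 10 := by
  have hg := continuous_logKernel hq.ne'
  have h := abs_integral_sub_integral_le
    (f := fun v => ∫ s in (1 : ℝ)..2, logKernel q (1 + v * s))
    (φ := fun v => -(2 * Real.log q) * (1 / v * Real.log ((1 + 2 * v) / (1 + v))))
    (ψ := fun _ => Real.log 10) zero_le_one (Continuous.intervalIntegrable (by fun_prop) 0 1)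
    (intervalIntegrable_one_div_mul_log.const_mul _) intervalIntegrable_const fun v hv => ?_
  · rw [intervalIntegral.integral_const_mul, intervalIntegral.integral_const, smul_eq_mul,
      sub_zero, one_mul, sub_eq_add_neg, neg_mul, neg_neg] at h
    exact h
  rw [← integral_inv_one_add_mul hv.1, ← intervalIntegral.integral_const_mul]
  have hφ : ContinuousOn (fun s => -(2 * Real.log q) * (1 + v * s)⁻¹) (Ioi 0) :=
    continuousOn_const.mul <| ContinuousOn.inv₀ (by fun_prop) fun s hs => by
      have := mem_Ioi.mp hs; have := hv.1; positivity
  have h2 := abs_integral_sub_integral_le (ψ := fun _ => Real.log 10) one_le_two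
    (intervalIntegrable_logKernel_comp hq.ne' (f := fun s => 1 + v * s) (by fun_prop) 1 2)
    (IntervalIntegrable.of_continuousOn_Ioi hφ one_pos two_pos)
    intervalIntegrable_const fun s hs => ?_
  · rwa [intervalIntegral.integral_const, smul_eq_mul, show (2 : ℝ) - 1 = 1 by norm_num,
      one_mul] at h2
  have hs1 : 1 ≤ 1 + v * s := by nlinarith [hv.1, hs.1]
  have hs3 : 1 + v * s ≤ 3 := by nlinarith [hv.2, hs.2, hv.1, hs.1]
  simpa [neg_mul, sub_neg_eq_add, div_eq_mul_inv] using abs_logKernel_add_log_div_le hq hq1 hs1 hs3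

/-- **Asymptotics of `I(q₀)`.** There is a constant `A > 0` such that for all
`0 < q₀ < 1/2`, `|I(q₀) - 2 log 2 (log q₀)² - C₁ |log q₀|| ≤ A`, where
`C₁ = 2 (log 2)² - 4 ∫₀¹ (1/x) log((1+2x)/(1+x)) dx`. -/
theorem stmt_8 :
    ∃ A : ℝ, 0 < A ∧ ∀ q₀ : ℝ, 0 < q₀ → q₀ < 1 / 2 →
      |Ifun q₀ - 2 * Real.log 2 * (Real.log q₀) ^ 2 -
          (2 * (Real.log 2) ^ 2 -
            4 * ∫ x in (0 : ℝ)..1, (1 / x) * Real.log ((1 + 2 * x) / (1 + x))) *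
            abs (Real.log q₀)| ≤ A := by
  refine ⟨2 * Real.log 2 + 4 * Real.log 10, by positivity, fun q hq hq2 => ?_⟩
  have hq1 : q ≤ 1 := by linarith
  set J := ∫ x in (0 : ℝ)..1, 1 / x * Real.log ((1 + 2 * x) / (1 + x))
  set G₁ := ∫ u in (0 : ℝ)..1, logKernel q u
  have hG := abs_integral_logKernel_sub_log_sq_le hq hq1
  have hP := abs_integral_inv_mul_integral_logKernel_sub_le hq hq1
  rw [← integral_integral_logKernel_mul hq.ne'] at hP
  have hQ := abs_integral_integral_logKernel_one_add_mul_add_le hq hq1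
  set P := ∫ v in (0 : ℝ)..1, ∫ s in (1 : ℝ)..2, logKernel q (v * s)
  set Q := ∫ v in (0 : ℝ)..1, ∫ s in (1 : ℝ)..2, logKernel q (1 + v * s)
  have hG' : |Real.log 2 * (G₁ - Real.log q ^ 2)| ≤ Real.log 2 := by
    rw [abs_mul, abs_of_pos (Real.log_pos one_lt_two)]
    exact mul_le_of_le_one_right (Real.log_pos one_lt_two).le hG
  rw [Ifun_eq_two_mul_sub hq.ne', abs_of_neg (Real.log_neg hq (by linarith)),
    show 2 * (P - Q) - 2 * Real.log 2 * Real.log q ^ 2 - (2 * Real.log 2 ^ 2 - 4 * J) * -Real.log q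
      = 2 * (Real.log 2 * (G₁ - Real.log q ^ 2) +
        (P - (G₁ * Real.log 2 - Real.log q * Real.log 2 ^ 2)) - (Q + 2 * Real.log q * J)) by ring]
  rw [abs_le] at hG' hP hQ ⊢
  constructor <;> linarith [hG'.1, hG'.2, hP.1, hP.2, hQ.1, hQ.2]
end

section
/- For every β > 0 and every q₀ ∈ ℝ with q₀ ≠ 0, the function (ξ, η) ↦ Σ₂(β, q₀, ξ, η) is differentiable at (0, 0) and its gradient there vanishes: ∂Σ₂/∂ξ (β, q₀, 0, 0) = 0 and ∂Σ₂/∂η (β, q₀, 0, 0) = 0. -/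
/-!
The self-energy is even in the momentum: the substitution `(x, y, x', y') ↦ -(x, y, x', y')`
preserves the box `[-1, 1]⁴`, fixes `E₂` and `E₃`, and turns `E₁` at `(-ξ, -η)` into `E₁` at
`(ξ, η)`. For `q₀ ≠ 0` the denominator has imaginary part `q₀`, so the integrand is smooth in all
variables and `Σ₂` is differentiable by differentiation under the integral sign over the compact
box. An even function differentiable at the origin has vanishing derivative there.
-/

/-- The Fermi function `f_β(E) = 1/(1 + e^{βE})`. -/
noncomputable def fermi (β E : ℝ) : ℝ := 1 / (1 + Real.exp (β * E))

/-- The second-order self-energy of the `xy`-model at inverse temperature `β`,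
frequency `q₀` and spatial momentum `(ξ, η)`:
`Σ₂(β, q₀, ξ, η) = -∫_{[-1,1]⁴} [f_β(E₁)(f_β(E₂) - f_β(E₃)) + f_β(E₂)(f_β(E₃) - 1)]
  / (i q₀ + E₂ - E₃ - E₁)` with `E₁ = (ξ+x-x')(η+y-y')`, `E₂ = xy`, `E₃ = x'y'`. -/
noncomputable def Sigma2 (β q₀ ξ η : ℝ) : ℂ :=
  - ∫ x in (-1 : ℝ)..1, ∫ y in (-1 : ℝ)..1, ∫ x' in (-1 : ℝ)..1, ∫ y' in (-1 : ℝ)..1,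
      ((fermi β ((ξ + x - x') * (η + y - y')) * (fermi β (x * y) - fermi β (x' * y'))
          + fermi β (x * y) * (fermi β (x' * y') - 1) : ℝ) : ℂ) /
        (Complex.I * (q₀ : ℂ) +
          ((x * y - x' * y' - (ξ + x - x') * (η + y - y') : ℝ) : ℂ))

open MeasureTheory Set

theorem Function.Even.hasFDerivAt_zero {𝕜 E F : Type*} [NontriviallyNormedField 𝕜] [CharZero 𝕜]
    [NormedAddCommGroup E] [NormedSpace 𝕜 E] [NormedAddCommGroup F] [NormedSpace 𝕜 F]
    {f : E → F} (hf : Function.Even f) (hd : DifferentiableAt 𝕜 f 0) :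
    HasFDerivAt f (0 : E →L[𝕜] F) 0 := by
  have h := hd.hasFDerivAt
  have h_neg : HasFDerivAt f (-fderiv 𝕜 f 0) 0 := by
    have := (neg_zero (G := E) ▸ h).comp (0 : E) (hasFDerivAt_id (0 : E)).neg
    simpa [Function.comp_def, hf _] using this
  have h_two : (2 : 𝕜) • fderiv 𝕜 f 0 = 0 := by
    rw [two_smul]
    nth_rw 2 [h.unique h_neg]
    exact add_neg_cancel _
  rwa [(smul_eq_zero.mp h_two).resolve_left two_ne_zero] at h

theorem setIntegral_comp_neg_of_neg_eq {G E : Type*} [MeasurableSpace G] [InvolutiveNeg G]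
    [MeasurableNeg G] [NormedAddCommGroup E] [NormedSpace ℝ E] {μ : Measure G}
    (hμ : MeasurePreserving Neg.neg μ μ) {s : Set G} (hs : -s = s) (g : G → E) :
    ∫ x in s, g (-x) ∂μ = ∫ x in s, g x ∂μ := by
  conv_lhs => rw [← hs]
  exact hμ.setIntegral_preimage_emb measurableEmbedding_neg g s

theorem measurePreserving_neg_volume_real4 :
    MeasurePreserving (Neg.neg : ℝ × ℝ × ℝ × ℝ → ℝ × ℝ × ℝ × ℝ) :=
  let n := Measure.measurePreserving_neg (volume : Measure ℝ)
  n.prod (n.prod (n.prod n))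

theorem setIntegral_Icc_prod_eq_intervalIntegral {F E : Type*} [MeasureSpace F]
    [SFinite (volume : Measure F)] [Preorder F] [NormedAddCommGroup E] [NormedSpace ℝ E]
    {g : ℝ × F → E} {a b : ℝ × F} (hab : a.1 ≤ b.1) (hg : IntegrableOn g (Icc a b)) :
    ∫ z in Icc a b, g z = ∫ x in a.1..b.1, ∫ y in Icc a.2 b.2, g (x, y) := by
  rw [Icc_prod_eq] at hg ⊢
  rw [Measure.volume_eq_prod, setIntegral_prod _ hg, intervalIntegral.integral_of_le hab,
    integral_Icc_eq_integral_Ioc]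

theorem setIntegral_Icc_eq_iteratedIntervalIntegral {E : Type*} [NormedAddCommGroup E]
    [NormedSpace ℝ E] {g : ℝ × ℝ × ℝ × ℝ → E} (hg : Continuous g) {a b : ℝ × ℝ × ℝ × ℝ}
    (hab : a ≤ b) :
    ∫ z in Icc a b, g z = ∫ x in a.1..b.1, ∫ y in a.2.1..b.2.1, ∫ x' in a.2.2.1..b.2.2.1,
      ∫ y' in a.2.2.2..b.2.2.2, g (x, y, x', y') := by
  rw [setIntegral_Icc_prod_eq_intervalIntegral hab.1 hg.integrableOn_Icc]
  congr 1 with x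
  rw [setIntegral_Icc_prod_eq_intervalIntegral hab.2.1
    (by fun_prop : Continuous _).integrableOn_Icc]
  congr 1 with y
  rw [setIntegral_Icc_prod_eq_intervalIntegral hab.2.2.1
    (by fun_prop : Continuous _).integrableOn_Icc]
  congr 1 with x'
  rw [intervalIntegral.integral_of_le hab.2.2.2, integral_Icc_eq_integral_Ioc]

theorem hasFDerivAt_setIntegral_of_contDiff {P Z E : Type*} [NormedAddCommGroup P]
    [NormedSpace ℝ P] [ProperSpace P] [NormedAddCommGroup Z] [NormedSpace ℝ Z] [MeasurableSpace Z]
    [OpensMeasurableSpace Z] [NormedAddCommGroup E] [NormedSpace ℝ E] {μ : Measure Z}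
    [IsFiniteMeasureOnCompacts μ] {Φ : P × Z → E} (hΦ : ContDiff ℝ 1 Φ) {K : Set Z}
    (hK : IsCompact K) (p₀ : P) :
    HasFDerivAt (fun p => ∫ z in K, Φ (p, z) ∂μ)
      (∫ z in K, fderiv ℝ Φ (p₀, z) ∘L ContinuousLinearMap.inl ℝ P Z ∂μ) p₀ := by
  set Φ' : P × Z → P →L[ℝ] E := fun w => fderiv ℝ Φ w ∘L ContinuousLinearMap.inl ℝ P Z
  have hΦ'_cont : Continuous Φ' := (hΦ.continuous_fderiv one_ne_zero).clm_comp continuous_const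
  obtain ⟨C, hC⟩ := ((isCompact_closedBall p₀ 1).prod hK).exists_bound_of_continuousOn
    hΦ'_cont.continuousOn
  refine hasFDerivAt_integral_of_dominated_of_fderiv_le (bound := fun _ => C)
    (F' := fun p z => Φ' (p, z)) (Metric.ball_mem_nhds p₀ one_pos) ?_ ?_ ?_ ?_ ?_ ?_
  · exact .of_forall fun p =>
      ((hΦ.continuous.comp (by fun_prop)).continuousOn.integrableOn_compact hK).aestronglyMeasurable
  · exact (hΦ.continuous.comp (by fun_prop)).continuousOn.integrableOn_compact hK
  · exact ((hΦ'_cont.comp (by fun_prop)).continuousOn.integrableOn_compact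
      hK).aestronglyMeasurable
  · exact ae_restrict_of_forall_mem hK.measurableSet fun z hz p hp =>
      hC (p, z) ⟨Metric.ball_subset_closedBall hp, hz⟩
  · exact integrableOn_const hK.measure_lt_top.ne
  · refine .of_forall fun z p _ => ?_
    exact ((hΦ.differentiable one_ne_zero).differentiableAt.hasFDerivAt).comp p
      (hasFDerivAt_prodMk_left p z)

theorem contDiff_fermi (β : ℝ) {n : WithTop ℕ∞} : ContDiff ℝ n (fermi β) := by
  unfold fermi
  fun_prop (disch := intro x; positivity)

/-- `p = (ξ, η)` and `z = (x, y, x', y')`. -/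
noncomputable def sigma2Integrand (β q₀ : ℝ) (p : ℝ × ℝ) (z : ℝ × ℝ × ℝ × ℝ) : ℂ :=
  ((fermi β ((p.1 + z.1 - z.2.2.1) * (p.2 + z.2.1 - z.2.2.2)) *
      (fermi β (z.1 * z.2.1) - fermi β (z.2.2.1 * z.2.2.2))
      + fermi β (z.1 * z.2.1) * (fermi β (z.2.2.1 * z.2.2.2) - 1) : ℝ) : ℂ) /
    (Complex.I * (q₀ : ℂ) +
      ((z.1 * z.2.1 - z.2.2.1 * z.2.2.2 - (p.1 + z.1 - z.2.2.1) * (p.2 + z.2.1 - z.2.2.2) : ℝ) : ℂ))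

theorem sigma2Integrand_neg (β q₀ : ℝ) (p : ℝ × ℝ) (z : ℝ × ℝ × ℝ × ℝ) :
    sigma2Integrand β q₀ (-p) z = sigma2Integrand β q₀ p (-z) := by
  simp only [sigma2Integrand, Prod.fst_neg, Prod.snd_neg, neg_mul_neg]
  ring_nf

theorem contDiff_sigma2Integrand (β : ℝ) {q₀ : ℝ} (hq₀ : q₀ ≠ 0) {n : WithTop ℕ∞} :
    ContDiff ℝ n (Function.uncurry (sigma2Integrand β q₀)) := by
  have hfermi := contDiff_fermi β (n := n)
  have hofReal : ContDiff ℝ n Complex.ofReal := Complex.ofRealCLM.contDiff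
  simp only [Function.uncurry_def, sigma2Integrand, div_eq_mul_inv]
  fun_prop (disch := exact fun w h => hq₀ (by simpa using congrArg Complex.im h))

theorem Sigma2_eq_neg_setIntegral (β : ℝ) {q₀ : ℝ} (hq₀ : q₀ ≠ 0) (p : ℝ × ℝ) :
    Sigma2 β q₀ p.1 p.2 = -∫ z in Icc (-1) 1, sigma2Integrand β q₀ p z := by
  have hcont : Continuous (sigma2Integrand β q₀ p) :=
    (contDiff_sigma2Integrand β hq₀ (n := 0)).continuous.comp (Continuous.prodMk_right p)
    |>.congr fun _ => rfl
  have hle : (-1 : ℝ × ℝ × ℝ × ℝ) ≤ 1 := neg_le_self zero_le_one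
  rw [setIntegral_Icc_eq_iteratedIntervalIntegral hcont hle]
  rfl

theorem stmt_12_general (β q₀ : ℝ) (hq₀ : q₀ ≠ 0) :
    HasFDerivAt (fun p : ℝ × ℝ => Sigma2 β q₀ p.1 p.2)
      (0 : ℝ × ℝ →L[ℝ] ℂ) (0, 0) := by
  simp_rw [Sigma2_eq_neg_setIntegral β hq₀]
  refine Function.Even.hasFDerivAt_zero (fun p => ?_) ?_
  · simp_rw [sigma2Integrand_neg]
    rw [setIntegral_comp_neg_of_neg_eq measurePreserving_neg_volume_real4 (by simp)]
  · exact (hasFDerivAt_setIntegral_of_contDiff (contDiff_sigma2Integrand β hq₀)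
      isCompact_Icc 0).neg.differentiableAt

/-- **Vanishing of the spatial gradient.** For every `β > 0` and `q₀ ≠ 0`, the map
`(ξ, η) ↦ Σ₂(β, q₀, ξ, η)` is differentiable at `(0, 0)` with vanishing derivative;
in particular `∂Σ₂/∂ξ (β, q₀, 0, 0) = 0` and `∂Σ₂/∂η (β, q₀, 0, 0) = 0`. -/
theorem stmt_12 (β q₀ : ℝ) (hβ : 0 < β) (hq₀ : q₀ ≠ 0) :
    HasFDerivAt (fun p : ℝ × ℝ => Sigma2 β q₀ p.1 p.2)
      (0 : ℝ × ℝ →L[ℝ] ℂ) (0, 0) :=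
  stmt_12_general β q₀ hq₀
end
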